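/- arXiv:0910.5044 — 5 statements merged into one kernel-verified Lean document; each statement's English description precedes it below -/
import Mathlib

section
/- Let A be a complex Banach algebra that is biflat with constant K ≥ 1, witnessed by ρ. For n ≥ 1 define σ : Cⁿ(A)→C^{n−1}(A) by (σψ)(a₀,…,a_{n−1}) = ρ(Ψ)(a₀), where Ψ is the bounded bilinear functional Ψ(x,y) = ψ(x,y,a₁,…,a_{n−1}). Then ‖σ‖ ≤ K, and δ(σψ) + σ(δψ) = ψ for every ψ ∈ Cⁿ(A) and every n ≥ 1. Moreover δσδ = δ on C⁰(A), so that id − σδ maps C⁰(A) = A* into the space of traces on A. -/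
/-- `Coch A n` is `Cⁿ(A)`: the Banach space of bounded `(n+1)`-multilinear
functionals on `A`.  In particular `Coch A 1` is the space of bounded bilinear
functionals on `A × A`, i.e. the dual of the projective tensor product `A ⊗̂ A`. -/
abbrev Coch (A : Type*) [NonUnitalNormedRing A] [NormedSpace ℂ A] (n : ℕ) :=
  ContinuousMultilinearMap ℂ (fun _ : Fin (n + 1) => A) ℂ

variable {A : Type*} [NonUnitalNormedRing A] [NormedSpace ℂ A]

/-- The `j`-th face `(a₀, …, aⱼaⱼ₊₁, …, a_{n+1})` of a tuple. -/
def hochFace {n : ℕ} (a : Fin (n + 2) → A) (j : Fin (n + 1)) : Fin (n + 1) → A :=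
  fun i =>
    if (i : ℕ) < (j : ℕ) then a i.castSucc
    else if (i : ℕ) = (j : ℕ) then a i.castSucc * a i.succ
    else a i.succ

/-- The truncated Hochschild coboundary `δ'`. -/
noncomputable def hochDelta' (n : ℕ) (φ : (Fin (n + 1) → A) → ℂ) :
    (Fin (n + 2) → A) → ℂ :=
  fun a => ∑ j : Fin (n + 1), (-1 : ℂ) ^ (j : ℕ) * φ (hochFace a j)

/-- The Hochschild coboundary `δ`. -/
noncomputable def hochDelta (n : ℕ) (φ : (Fin (n + 1) → A) → ℂ) :
    (Fin (n + 2) → A) → ℂ :=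
  fun a => hochDelta' n φ a +
    (-1 : ℂ) ^ (n + 1) *
      φ (fun i => if i = 0 then a (Fin.last (n + 1)) * a 0 else a i.castSucc)

/-- The signed cyclic shift `t`: `tψ(a₀,…,aₙ) = (−1)ⁿ ψ(aₙ,a₀,…,a_{n−1})`. -/
noncomputable def cycT (n : ℕ) (φ : (Fin (n + 1) → A) → ℂ) :
    (Fin (n + 1) → A) → ℂ :=
  fun a => (-1 : ℂ) ^ n * φ (fun i => a (i - 1))

/-- `ρ` witnesses that `A` is biflat with constant `K`: it is a bounded linear
`A`-bimodule map from the bounded bilinear functionals on `A × A` to `A*`, of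
norm `≤ K`, which is a left inverse to `π*`, where `π(a ⊗ b) = ab`. -/
def IsBiflatWitness {A : Type*} [NonUnitalNormedRing A] [NormedSpace ℂ A]
    (K : ℝ) (ρ : Coch A 1 →L[ℂ] (A →L[ℂ] ℂ)) : Prop :=
  ‖ρ‖ ≤ K ∧
  (∀ (f : A →L[ℂ] ℂ) (Ψ : Coch A 1),
    (∀ x y, Ψ ![x, y] = f (x * y)) → ρ Ψ = f) ∧
  (∀ (a : A) (Ψ Ψ' : Coch A 1),
    (∀ x y, Ψ' ![x, y] = Ψ ![x, y * a]) → ∀ x, ρ Ψ' x = ρ Ψ (x * a)) ∧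
  (∀ (a : A) (Ψ Ψ' : Coch A 1),
    (∀ x y, Ψ' ![x, y] = Ψ ![a * x, y]) → ∀ x, ρ Ψ' x = ρ Ψ (a * x))

/-- `χ ∈ C^k(A)` is the result of applying the splitting map `σ` determined by
`ρ` to `ψ ∈ C^{k+1}(A)`:  `χ(a₀,…,a_k) = ρ[ψ(–, –, a₁, …, a_k)](a₀)`. -/
def RepSigma {A : Type*} [NonUnitalNormedRing A] [NormedSpace ℂ A]
    (ρ : Coch A 1 →L[ℂ] (A →L[ℂ] ℂ)) {k : ℕ}
    (ψ : Coch A (k + 1)) (χ : Coch A k) : Prop :=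
  ∀ (a : Fin (k + 1) → A) (Ψ : Coch A 1),
    (∀ x y, Ψ ![x, y] = ψ (Fin.cons x (Fin.cons y (fun i => a i.succ)))) →
    χ a = ρ Ψ (a 0)

/-! The splitting map applies `ρ` to the bilinear slices `ψ(–, –, a₁, …, aₖ)` and evaluates
at `a₀`, so `‖σ‖ ≤ ‖ρ‖`. In the first two variables, the slice of `δψ` at `t = (a₁, …, a_{k+1})`
is `π*(ψ(–, t)) − a₁ · ψ(–, –, a₂, …) + ∑ ± (inner faces) ± ψ(–, –, a₁, …, aₖ) · a_{k+1}`.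
Since `ρ` splits `π*` and is a bimodule map, applying `ρ` and evaluating at `a₀` gives
`ψ(a₀, …, a_{k+1})` plus exactly the terms of `δ(σψ)(a₀, …, a_{k+1})` with opposite signs.
In degree zero, `δδ = 0` turns this identity into `δσδ = δ`, and since `δf(a, b) = f(ab) − f(ba)`
on `C⁰(A)`, the functional `f − σδf` vanishes on commutators. -/

open Fin

lemma Fin.init_cons {α : Type*} {n : ℕ} (x : α) (t : Fin (n + 1) → α) :
    init (cons x t : Fin (n + 2) → α) = cons x (init t) := by
  funext i
  cases i using Fin.cases <;> rfl

def finAddTwoEquivSum (k : ℕ) : Fin (k + 1 + 1) ≃ Fin k ⊕ Fin 2 :=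
  (finCongr (Nat.add_comm k 2)).trans (finSumFinEquiv.symm.trans (Equiv.sumComm _ _))

lemma sum_elim_comp_finAddTwoEquivSum {α : Type*} {k : ℕ} (t : Fin k → α) (g : Fin 2 → α) :
    (fun i => Sum.elim t g (finAddTwoEquivSum k i)) = cons (g 0) (cons (g 1) t) := by
  funext i
  induction i using Fin.cases with
  | zero =>
    have : Fin.cast (Nat.add_comm k 2) 0 = castAdd k (0 : Fin 2) := rfl
    simp [finAddTwoEquivSum, this]
  | succ i =>
    induction i using Fin.cases with
    | zero =>
      have : Fin.cast (Nat.add_comm k 2) 1 = castAdd k (1 : Fin 2) := by ext; simp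
      simp [finAddTwoEquivSum, this]
    | succ i =>
      have : Fin.cast (Nat.add_comm k 2) i.succ.succ = natAdd 2 i := by
        ext
        simp only [val_cast, val_succ, val_natAdd]
        omega
      simp [finAddTwoEquivSum, this]

section ContractingHomotopy

open ContinuousMultilinearMap

variable {𝕜 E G : Type*} [NontriviallyNormedField 𝕜] [NormedAddCommGroup E] [NormedSpace 𝕜 E]
  [NormedAddCommGroup G] [NormedSpace 𝕜 G] {k : ℕ}

-- Arities are written `k + 1 + 1` (as in `Coch A (k + 1)`) and `2` (as in slices, never `1 + 1`
-- as in `Coch A 1`): `simp` lemmas only fire on the syntactic form of the arity they are stated in.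
variable (𝕜 E G) in
noncomputable def sliceFirstTwo (k : ℕ) :
    (E [×k + 1 + 1]→L[𝕜] G) ≃ₗᵢ[𝕜] E [×k]→L[𝕜] E [×2]→L[𝕜] G :=
  (domDomCongrₗᵢ 𝕜 E G (finAddTwoEquivSum k)).trans (currySumEquiv 𝕜 _ _ E G)

@[simp]
lemma sliceFirstTwo_apply (f : E [×k + 1 + 1]→L[𝕜] G) (t : Fin k → E) (g : Fin 2 → E) :
    sliceFirstTwo 𝕜 E G k f t g = f (cons (g 0) (cons (g 1) t)) := by
  change (f.domDomCongr (finAddTwoEquivSum k)).currySum t g = _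
  rw [currySum_apply, domDomCongr_apply, sum_elim_comp_finAddTwoEquivSum]

variable (ρ : (E [×2]→L[𝕜] G) →L[𝕜] E →L[𝕜] G)

noncomputable def contractingHomotopy (f : E [×k + 1 + 1]→L[𝕜] G) : E [×k + 1]→L[𝕜] G :=
  (ρ.compContinuousMultilinearMap (sliceFirstTwo 𝕜 E G k f)).flipLinear.uncurryLeft

lemma contractingHomotopy_apply (f : E [×k + 1 + 1]→L[𝕜] G) (a : Fin (k + 1) → E) :
    contractingHomotopy ρ f a = ρ (sliceFirstTwo 𝕜 E G k f (tail a)) (a 0) := rfl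

lemma norm_contractingHomotopy_le (f : E [×k + 1 + 1]→L[𝕜] G) :
    ‖contractingHomotopy ρ f‖ ≤ ‖ρ‖ * ‖f‖ := by
  refine opNorm_le_bound (by positivity) fun a => ?_
  set S := sliceFirstTwo 𝕜 E G k f
  calc ‖ρ (S (tail a)) (a 0)‖
      ≤ ‖ρ‖ * (‖S‖ * ∏ i, ‖tail a i‖) * ‖a 0‖ :=
        (ρ (S (tail a))).le_of_opNorm_le (ρ.le_opNorm_of_le (S.le_opNorm _)) _
    _ = ‖ρ‖ * ‖f‖ * ∏ i, ‖a i‖ := by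
        rw [LinearIsometryEquiv.norm_map, Fin.prod_univ_succ]
        simp only [tail]
        ring

@[simp]
lemma contractingHomotopy_zero : contractingHomotopy ρ (0 : E [×k + 1 + 1]→L[𝕜] G) = 0 := by
  ext a
  simp [contractingHomotopy_apply, LinearIsometryEquiv.map_zero]

end ContractingHomotopy

namespace ContinuousLinearMap

variable {𝕜 E G : Type*} [NontriviallyNormedField 𝕜] [NormedAddCommGroup E] [NormedSpace 𝕜 E]
  [NormedAddCommGroup G] [NormedSpace 𝕜 G]

noncomputable def uncurryFinTwo (B : E →L[𝕜] E →L[𝕜] G) : E [×2]→L[𝕜] G :=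
  ((continuousMultilinearCurryFin1 𝕜 E G).symm.toContinuousLinearEquiv.toContinuousLinearMap.comp
    B).uncurryLeft

@[simp]
lemma uncurryFinTwo_apply (B : E →L[𝕜] E →L[𝕜] G) (g : Fin 2 → E) :
    B.uncurryFinTwo g = B (g 0) (g 1) := rfl

end ContinuousLinearMap

section Faces

variable {M : Type*} [Mul M] {m : ℕ}

-- `hochFace` for tuples of every length `m + 1` (it needs length `n + 2`), so that the faces of
-- a tail can be taken uniformly in the degree, including degree zero.
def tupleFace (a : Fin (m + 1) → M) (j : Fin m) : Fin m → M :=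
  fun i =>
    if (i : ℕ) < (j : ℕ) then a i.castSucc
    else if (i : ℕ) = (j : ℕ) then a i.castSucc * a i.succ
    else a i.succ

lemma tupleFace_zero (a : Fin (m + 2) → M) :
    tupleFace a 0 = cons (a 0 * a 1) (tail (tail a)) := by
  funext i
  induction i using Fin.cases with
  | zero => simp [tupleFace]
  | succ p => simp [tupleFace, tail]

lemma tupleFace_succ (a : Fin (m + 2) → M) (j : Fin m) :
    tupleFace a j.succ = cons (a 0) (tupleFace (tail a) j) := by
  funext i
  induction i using Fin.cases with
  | zero => simp [tupleFace]
  | succ p =>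
    simp only [tupleFace, cons_succ, val_succ, Nat.add_lt_add_iff_right,
      Nat.add_right_cancel_iff, tail, ← succ_castSucc]

lemma cyclicFace_eq_cons (a : Fin (m + 2) → M) :
    (fun i : Fin (m + 1) => if i = 0 then a (last (m + 1)) * a 0 else a i.castSucc)
      = cons (a (last (m + 1)) * a 0) (init (tail a)) := by
  funext i
  induction i using Fin.cases with
  | zero => simp
  | succ p => simp [init, tail]

end Faces

section Coboundary

variable {R : Type*} [NonUnitalNormedRing R]

lemma hochFace_eq_tupleFace {n : ℕ} (a : Fin (n + 2) → R) (j : Fin (n + 1)) :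
    hochFace a j = tupleFace a j := rfl

lemma hochDelta_apply_eq {n : ℕ} (φ : (Fin (n + 1) → R) → ℂ) (a : Fin (n + 2) → R) :
    hochDelta n φ a = φ (cons (a 0 * a 1) (tail (tail a)))
      - ∑ q : Fin n, (-1) ^ (q : ℕ) * φ (cons (a 0) (tupleFace (tail a) q))
      + (-1) ^ (n + 1) * φ (cons (a (last (n + 1)) * a 0) (init (tail a))) := by
  simp only [hochDelta, hochDelta', hochFace_eq_tupleFace, cyclicFace_eq_cons,
    Fin.sum_univ_succ, tupleFace_zero, tupleFace_succ, val_zero, val_succ, pow_zero, one_mul,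
    pow_succ, mul_neg, mul_one, neg_mul, Finset.sum_neg_distrib]
  ring

lemma hochDelta_zero_apply (φ : (Fin 1 → R) → ℂ) (b : Fin 2 → R) :
    hochDelta 0 φ b = φ (fun _ => b 0 * b 1) - φ (fun _ => b 1 * b 0) := by
  have hcons : ∀ (x : R) (t : Fin 0 → R), (cons x t : Fin 1 → R) = fun _ => x := fun x t => by
    funext i; fin_cases i; rfl
  simp [hochDelta_apply_eq, hcons, sub_eq_add_neg]

lemma hochDelta_one_hochDelta_zero (φ : (Fin 1 → R) → ℂ) :
    hochDelta 1 (hochDelta 0 φ) = 0 := by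
  funext c
  simp only [hochDelta_apply_eq (n := 1), hochDelta_zero_apply]
  simp [tupleFace_zero, mul_assoc, init, tail]

lemma sub_apply_mul_comm_of_hochDelta_zero_eq {φ φ' : (Fin 1 → R) → ℂ}
    (h : hochDelta 0 φ = hochDelta 0 φ') (a b : R) :
    φ (fun _ => a * b) - φ' (fun _ => a * b) = φ (fun _ => b * a) - φ' (fun _ => b * a) := by
  have hab := congrFun h ![a, b]
  simp only [hochDelta_zero_apply, Matrix.cons_val_zero, Matrix.cons_val_one] at hab
  linear_combination hab

end Coboundary

lemma repSigma_iff (ρ : Coch A 1 →L[ℂ] (A →L[ℂ] ℂ)) {k : ℕ} (ψ : Coch A (k + 1)) (χ : Coch A k) :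
    RepSigma ρ ψ χ ↔ χ = contractingHomotopy ρ ψ := by
  constructor
  · intro h
    ext a
    exact h a _ fun x y => sliceFirstTwo_apply ψ (tail a) ![x, y]
  · rintro rfl a Ψ hΨ
    have : Ψ = sliceFirstTwo ℂ A ℂ k ψ (tail a) := by
      ext g
      rw [show g = ![g 0, g 1] from (FinVec.etaExpand_eq g).symm, hΨ]
      exact (sliceFirstTwo_apply ψ (tail a) ![g 0, g 1]).symm
    rw [this]
    rfl

section Bimodule

open ContinuousMultilinearMap

variable [IsScalarTower ℂ A A] [SMulCommClass ℂ A A]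

noncomputable def mulPullback (f : A →L[ℂ] ℂ) : A [×2]→L[ℂ] ℂ :=
  f.compContinuousMultilinearMap (ContinuousLinearMap.mul ℂ A).uncurryFinTwo

noncomputable def leftAct (a : A) (Ψ : A [×2]→L[ℂ] ℂ) : A [×2]→L[ℂ] ℂ :=
  Ψ.compContinuousLinearMap ![ContinuousLinearMap.id ℂ A, (ContinuousLinearMap.mul ℂ A).flip a]

noncomputable def rightAct (Ψ : A [×2]→L[ℂ] ℂ) (a : A) : A [×2]→L[ℂ] ℂ :=
  Ψ.compContinuousLinearMap ![ContinuousLinearMap.mul ℂ A a, ContinuousLinearMap.id ℂ A]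

@[simp]
lemma mulPullback_apply (f : A →L[ℂ] ℂ) (g : Fin 2 → A) : mulPullback f g = f (g 0 * g 1) := by
  simp [mulPullback]

@[simp]
lemma leftAct_apply (a : A) (Ψ : A [×2]→L[ℂ] ℂ) (g : Fin 2 → A) :
    leftAct a Ψ g = Ψ ![g 0, g 1 * a] := by
  rw [leftAct, compContinuousLinearMap_apply]
  congr 1
  funext i
  fin_cases i <;> simp

@[simp]
lemma rightAct_apply (Ψ : A [×2]→L[ℂ] ℂ) (a : A) (g : Fin 2 → A) :
    rightAct Ψ a g = Ψ ![a * g 0, g 1] := by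
  rw [rightAct, compContinuousLinearMap_apply]
  congr 1
  funext i
  fin_cases i <;> simp

namespace IsBiflatWitness

variable {K : ℝ} {ρ : Coch A 1 →L[ℂ] (A →L[ℂ] ℂ)}

lemma apply_mulPullback (hρ : IsBiflatWitness K ρ) (f : A →L[ℂ] ℂ) : ρ (mulPullback f) = f :=
  hρ.2.1 f _ fun x y => mulPullback_apply f ![x, y]

lemma apply_leftAct (hρ : IsBiflatWitness K ρ) (a : A) (Ψ : A [×2]→L[ℂ] ℂ) (x : A) :
    ρ (leftAct a Ψ) x = ρ Ψ (x * a) :=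
  hρ.2.2.1 a Ψ _ (fun x y => leftAct_apply a Ψ ![x, y]) x

lemma apply_rightAct (hρ : IsBiflatWitness K ρ) (Ψ : A [×2]→L[ℂ] ℂ) (a : A) (x : A) :
    ρ (rightAct Ψ a) x = ρ Ψ (a * x) :=
  hρ.2.2.2 a Ψ _ (fun x y => rightAct_apply Ψ a ![x, y]) x

end IsBiflatWitness

lemma sliceFirstTwo_eq_of_coe_eq_hochDelta {k : ℕ} {ψ : Coch A (k + 1)} {dψ : Coch A (k + 2)}
    (hd : ⇑dψ = hochDelta (k + 1) ⇑ψ) (t : Fin (k + 1) → A) :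
    sliceFirstTwo ℂ A ℂ (k + 1) dψ t =
      mulPullback (ψ.curryLeft.flipMultilinear t)
        - leftAct (t 0) (sliceFirstTwo ℂ A ℂ k ψ (tail t))
        + ∑ q : Fin k, (-1 : ℂ) ^ (q : ℕ) • sliceFirstTwo ℂ A ℂ k ψ (tupleFace t q)
        + (-1 : ℂ) ^ k • rightAct (sliceFirstTwo ℂ A ℂ k ψ (init t)) (t (last k)) := by
  ext g
  simp only [add_apply, sub_apply, sum_apply, smul_apply, smul_eq_mul, sliceFirstTwo_apply,
    mulPullback_apply, leftAct_apply, rightAct_apply,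
    ContinuousLinearMap.flipMultilinear_apply_apply, curryLeft_apply, Matrix.cons_val_zero, Matrix.cons_val_one, Matrix.cons_val_fin_one, hd,
    hochDelta_apply_eq, cons_zero, cons_one, tail_cons, cons_last, init_cons, sum_univ_succ,
    tupleFace_zero, tupleFace_succ, val_zero, val_succ, pow_zero, pow_succ, mul_neg, mul_one,
    neg_mul, neg_neg, Finset.sum_neg_distrib]
  ring

lemma hochDelta_contractingHomotopy_add {K : ℝ} {ρ : Coch A 1 →L[ℂ] (A →L[ℂ] ℂ)}
    (hρ : IsBiflatWitness K ρ) {k : ℕ} {ψ : Coch A (k + 1)} {dψ : Coch A (k + 2)}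
    (hd : ⇑dψ = hochDelta (k + 1) ⇑ψ) :
    hochDelta k ⇑(contractingHomotopy ρ ψ) + ⇑(contractingHomotopy ρ dψ) = ⇑ψ := by
  funext a
  simp only [Pi.add_apply, hochDelta_apply_eq, contractingHomotopy_apply, tail_cons, cons_zero,
    sliceFirstTwo_eq_of_coe_eq_hochDelta hd, map_add, map_sub, _root_.map_sum, map_smul, add_apply,
    sub_apply, sum_apply, smul_apply, smul_eq_mul, ContinuousLinearMap.flipMultilinear_apply_apply,
    curryLeft_apply, cons_self_tail, hρ.apply_mulPullback, hρ.apply_leftAct, hρ.apply_rightAct]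
  have h1 : tail a 0 = a 1 := rfl
  have h2 : tail a (last k) = a (last (k + 1)) := congrArg a (succ_last k)
  rw [h1, h2, pow_succ]
  ring

lemma hochDelta_zero_contractingHomotopy {K : ℝ} {ρ : Coch A 1 →L[ℂ] (A →L[ℂ] ℂ)}
    (hρ : IsBiflatWitness K ρ) {f : Coch A 0} {df : Coch A 1} (hdf : ⇑df = hochDelta 0 ⇑f) :
    hochDelta 0 ⇑(contractingHomotopy ρ df) = hochDelta 0 ⇑f := by
  have hdd : ⇑(0 : Coch A 2) = hochDelta 1 ⇑df := by
    rw [hdf, hochDelta_one_hochDelta_zero]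
    rfl
  have := hochDelta_contractingHomotopy_add hρ hdd
  rw [contractingHomotopy_zero] at this
  simpa [hdf] using this

end Bimodule

theorem biflat_splitting_homotopy_for_hochschild_coboundary_general
    {A : Type*} [NonUnitalNormedRing A] [NormedSpace ℂ A]
    [IsScalarTower ℂ A A] [SMulCommClass ℂ A A]
    (K : ℝ) (ρ : Coch A 1 →L[ℂ] (A →L[ℂ] ℂ))
    (hρ : IsBiflatWitness K ρ) :
    -- σ is well defined on C^{k+1}(A) for every k ≥ 0
    (∀ (k : ℕ) (ψ : Coch A (k + 1)), ∃ χ : Coch A k, RepSigma ρ ψ χ) ∧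
    -- ‖σ‖ ≤ K
    (∀ (k : ℕ) (ψ : Coch A (k + 1)) (χ : Coch A k),
      RepSigma ρ ψ χ → ‖χ‖ ≤ K * ‖ψ‖) ∧
    -- δ(σψ) + σ(δψ) = ψ for ψ ∈ Cⁿ(A), n ≥ 1
    (∀ (k : ℕ) (ψ : Coch A (k + 1)) (χ : Coch A k)
        (dψ : Coch A (k + 2)) (χ' : Coch A (k + 1)),
      RepSigma ρ ψ χ → ⇑dψ = hochDelta (k + 1) ⇑ψ → RepSigma ρ dψ χ' →
      hochDelta k ⇑χ + ⇑χ' = ⇑ψ) ∧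
    -- δσδ = δ on C⁰(A), and id − σδ maps A* into the traces
    (∀ (f : Coch A 0) (df : Coch A 1) (g : Coch A 0),
      ⇑df = hochDelta 0 ⇑f → RepSigma ρ df g →
      hochDelta 0 ⇑g = hochDelta 0 ⇑f ∧
      ∀ a b : A,
        f (fun _ => a * b) - g (fun _ => a * b) =
          f (fun _ => b * a) - g (fun _ => b * a)) := by
  refine ⟨fun k ψ => ⟨_, (repSigma_iff ρ ψ _).2 rfl⟩, ?_, ?_, ?_⟩
  · intro k ψ χ hχ
    rw [(repSigma_iff ρ ψ χ).1 hχ]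
    exact (norm_contractingHomotopy_le ρ ψ).trans
      (mul_le_mul_of_nonneg_right hρ.1 (norm_nonneg ψ))
  · intro k ψ χ dψ χ' hχ hd hχ'
    rw [(repSigma_iff ρ ψ χ).1 hχ, (repSigma_iff ρ dψ χ').1 hχ']
    exact hochDelta_contractingHomotopy_add hρ hd
  · intro f df g hdf hg
    have hdg : hochDelta 0 ⇑g = hochDelta 0 ⇑f := by
      rw [(repSigma_iff ρ df g).1 hg]
      exact hochDelta_zero_contractingHomotopy hρ hdf
    exact ⟨hdg, sub_apply_mul_comm_of_hochDelta_zero_eq hdg.symm⟩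

/-- If `A` is biflat with constant `K ≥ 1`, witnessed by `ρ`,
then the map `σψ(a₀,…,a_{n−1}) = ρ[ψ(–,–,a₁,…,a_{n−1})](a₀)` is a well-defined
bounded operator `Cⁿ(A) → C^{n−1}(A)` of norm `≤ K`, it is a contracting
homotopy for the Hochschild coboundary `δ` in degrees `n ≥ 1`, and `δσδ = δ`
on `C⁰(A)`, so that `id − σδ` maps `C⁰(A) = A*` into the traces on `A`. -/
theorem biflat_splitting_homotopy_for_hochschild_coboundary
    {A : Type*} [NonUnitalNormedRing A] [NormedSpace ℂ A]
    [IsScalarTower ℂ A A] [SMulCommClass ℂ A A] [CompleteSpace A]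
    (K : ℝ) (hK : 1 ≤ K) (ρ : Coch A 1 →L[ℂ] (A →L[ℂ] ℂ))
    (hρ : IsBiflatWitness K ρ) :
    -- σ is well defined on C^{k+1}(A) for every k ≥ 0
    (∀ (k : ℕ) (ψ : Coch A (k + 1)), ∃ χ : Coch A k, RepSigma ρ ψ χ) ∧
    -- ‖σ‖ ≤ K
    (∀ (k : ℕ) (ψ : Coch A (k + 1)) (χ : Coch A k),
      RepSigma ρ ψ χ → ‖χ‖ ≤ K * ‖ψ‖) ∧
    -- δ(σψ) + σ(δψ) = ψ for ψ ∈ Cⁿ(A), n ≥ 1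
    (∀ (k : ℕ) (ψ : Coch A (k + 1)) (χ : Coch A k)
        (dψ : Coch A (k + 2)) (χ' : Coch A (k + 1)),
      RepSigma ρ ψ χ → ⇑dψ = hochDelta (k + 1) ⇑ψ → RepSigma ρ dψ χ' →
      hochDelta k ⇑χ + ⇑χ' = ⇑ψ) ∧
    -- δσδ = δ on C⁰(A), and id − σδ maps A* into the traces
    (∀ (f : Coch A 0) (df : Coch A 1) (g : Coch A 0),
      ⇑df = hochDelta 0 ⇑f → RepSigma ρ df g →
      hochDelta 0 ⇑g = hochDelta 0 ⇑f ∧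
      ∀ a b : A,
        f (fun _ => a * b) - g (fun _ => a * b) =
          f (fun _ => b * a) - g (fun _ => b * a)) :=
  biflat_splitting_homotopy_for_hochschild_coboundary_general K ρ hρ
end

section
/- Let A be a complex Banach algebra, let τ ∈ A* be a trace and let n ≥ 0. Then δ(h(δ'(τ^(2n)))) = τ^(2n+2), and consequently S̃(τ^(2n)) = N(δ(h(δ'(τ^(2n))))) = τ^(2n+2). -/
variable {A : Type*} [NonUnitalNormedRing A] [NormedSpace ℂ A]

/-- The averaging operator `N = (n+1)⁻¹ ∑_{k=0}^{n} tᵏ` in degree `n`. -/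
noncomputable def cycN (n : ℕ) (φ : (Fin (n + 1) → A) → ℂ) :
    (Fin (n + 1) → A) → ℂ :=
  fun a => ((n : ℂ) + 1)⁻¹ * ∑ k ∈ Finset.range (n + 1), (cycT n)^[k] φ a

/-- The operator `h = −2(n+1)⁻¹ ∑_{k=1}^{n} k tᵏ` in degree `n`. -/
noncomputable def cycH (n : ℕ) (φ : (Fin (n + 1) → A) → ℂ) :
    (Fin (n + 1) → A) → ℂ :=
  fun a => (-2 / ((n : ℂ) + 1)) * ∑ k ∈ Finset.range (n + 1), (k : ℂ) * (cycT n)^[k] φ a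

/-- The shift map `S̃ψ = N(δ(h(δ'ψ)))` on cyclic `n`-cochains. -/
noncomputable def cycS (n : ℕ) (φ : (Fin (n + 1) → A) → ℂ) :
    (Fin (n + 3) → A) → ℂ :=
  cycN (n + 2) (hochDelta (n + 1) (cycH (n + 1) (hochDelta' n φ)))

/-- The ordered product `a₀a₁⋯aₙ` of a tuple of elements of `A`. -/
def ordProd : (n : ℕ) → (Fin (n + 1) → A) → A
  | 0, a => a 0
  | n + 1, a => ordProd n (fun i => a i.castSucc) * a (Fin.last (n + 1))

/-- The cochain `τ⁽ⁿ⁾(a₀,…,aₙ) = τ(a₀a₁⋯aₙ)` associated to `τ ∈ A*`. -/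
noncomputable def trCochain (τ : A →L[ℂ] ℂ) (n : ℕ) : (Fin (n + 1) → A) → ℂ :=
  fun a => τ (ordProd n a)


section Aux

variable {A : Type*} [NonUnitalNormedRing A] [NormedSpace ℂ A]

lemma ordProd_succ {n : ℕ} (a : Fin (n + 2) → A) :
    ordProd (n + 1) a = ordProd n (fun i => a i.castSucc) * a (Fin.last (n + 1)) := rfl

lemma ordProd_succ' {n : ℕ} : ∀ (a : Fin (n + 2) → A),
    ordProd (n + 1) a = a 0 * ordProd n (fun i => a i.succ) := by
  induction n with
  | zero => intro a; rfl
  | succ n ih =>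
    intro a
    rw [ordProd_succ a, ih (fun i => a i.castSucc), mul_assoc, ordProd_succ]
    simp only [Fin.castSucc_zero, Fin.succ_castSucc, Fin.succ_last]

lemma ordProd_hochFace {n : ℕ} : ∀ (a : Fin (n + 2) → A) (j : Fin (n + 1)),
    ordProd n (hochFace a j) = ordProd (n + 1) a := by
  induction n with
  | zero =>
    intro a j
    have hj : j = 0 := Fin.fin_one_eq_zero j
    subst hj
    show hochFace a 0 0 = ordProd 1 a
    simp [hochFace, ordProd]
  | succ n ih =>
    intro a j
    rcases Nat.lt_or_ge (j : ℕ) (n + 1) with hlt | hge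
    · have key : (fun i : Fin (n + 1) => hochFace a j i.castSucc)
          = hochFace (fun i => a i.castSucc) ⟨(j : ℕ), hlt⟩ := by
        funext i
        simp only [hochFace, Fin.coe_castSucc]
        split_ifs with h1 h2
        · rfl
        · exact congrArg (fun x => a i.castSucc.castSucc * a x) (Fin.succ_castSucc i)
        · exact congrArg a (Fin.succ_castSucc i)
      have hlast : hochFace a j (Fin.last (n + 1)) = a (Fin.last (n + 2)) := by
        have h1 : ¬ ((Fin.last (n + 1) : ℕ) < (j : ℕ)) := by
          simp only [Fin.val_last]; omega
        have h2 : ¬ ((Fin.last (n + 1) : ℕ) = (j : ℕ)) := by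
          simp only [Fin.val_last]; omega
        simp only [hochFace, h1, h2, if_false]
        exact congrArg a (Fin.succ_last (n + 1))
      rw [ordProd_succ, key, hlast, ih, ← ordProd_succ]
    · have heq : (j : ℕ) = n + 1 := by omega
      have key : (fun i : Fin (n + 1) => hochFace a j i.castSucc)
          = fun i => a i.castSucc.castSucc := by
        funext i
        have hi : (i.castSucc : ℕ) < (j : ℕ) := by
          simp only [Fin.coe_castSucc]; omega
        simp only [hochFace, hi, if_true]
      have hlast : hochFace a j (Fin.last (n + 1))
          = a ((Fin.last (n + 1)).castSucc) * a (Fin.last (n + 2)) := by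
        have h1 : ¬ ((Fin.last (n + 1) : ℕ) < (j : ℕ)) := by
          simp only [Fin.val_last]; omega
        have h2 : ((Fin.last (n + 1) : ℕ) = (j : ℕ)) := by
          simp only [Fin.val_last]; omega
        simp only [hochFace]
        rw [if_neg h1, if_pos h2]
        exact congrArg (fun x => a (Fin.last (n + 1)).castSucc * a x) (Fin.succ_last (n + 1))
      rw [ordProd_succ, key, hlast, ← mul_assoc]
      rw [ordProd_succ a, ordProd_succ (fun i => a i.castSucc)]

lemma trace_rot (τ : A →L[ℂ] ℂ) (hτ : ∀ a b : A, τ (a * b) = τ (b * a)) :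
    ∀ (m : ℕ) (a : Fin (m + 1) → A),
      τ (ordProd m (fun i => a (i - 1))) = τ (ordProd m a) := by
  intro m a
  cases m with
  | zero =>
    congr 1
  | succ k =>
    have h0 : ((0 : Fin (k + 2)) - 1) = Fin.last (k + 1) := by
      apply Fin.ext
      simp [Fin.sub_def]
    have hsucc : ∀ i : Fin (k + 1), (i.succ - 1 : Fin (k + 2)) = i.castSucc := by
      intro i
      apply Fin.ext
      simp only [Fin.sub_def, Fin.val_succ, Fin.val_one, Fin.coe_castSucc]
      have : k + 2 - 1 + (↑i + 1) = ↑i + (k + 2) := by omega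
      rw [this, Nat.add_mod_right, Nat.mod_eq_of_lt (by omega)]
    rw [ordProd_succ' (fun i => a (i - 1)), ordProd_succ a]
    have h1 : (fun i : Fin (k + 1) => a (i.succ - 1)) = fun i => a i.castSucc := by
      funext i; exact congrArg a (hsucc i)
    rw [h0, h1, hτ]

lemma trace_wrap (τ : A →L[ℂ] ℂ) (hτ : ∀ a b : A, τ (a * b) = τ (b * a))
    (m : ℕ) (a : Fin (m + 2) → A) :
    τ (ordProd m (fun i : Fin (m + 1) =>
        if i = 0 then a (Fin.last (m + 1)) * a 0 else a i.castSucc))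
      = τ (ordProd (m + 1) a) := by
  cases m with
  | zero =>
    show τ (a (Fin.last 1) * a 0) = τ (ordProd 1 a)
    rw [hτ]
    rfl
  | succ k =>
    have e1 : ordProd (k + 1) (fun i : Fin (k + 2) =>
        if i = 0 then a (Fin.last (k + 2)) * a 0 else a i.castSucc)
        = (a (Fin.last (k + 2)) * a 0) * ordProd k (fun i : Fin (k + 1) => a i.succ.castSucc) := by
      rw [ordProd_succ']
      exact congrArg₂ (· * ·) (if_pos rfl) (congrArg (ordProd k) (by funext i; exact if_neg (Fin.succ_ne_zero i)))
    have e2 : ordProd (k + 2) a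
        = (a 0 * ordProd k (fun i : Fin (k + 1) => a i.succ.castSucc)) * a (Fin.last (k + 2)) := by
      rw [ordProd_succ a, ordProd_succ']
      simp only [Fin.castSucc_zero]
    rw [e1, e2, mul_assoc, hτ]

lemma cycT_smul (m : ℕ) (c : ℂ) (φ : (Fin (m + 1) → A) → ℂ) :
    cycT m (c • φ) = c • cycT m φ := by
  funext a
  simp only [cycT, Pi.smul_apply, smul_eq_mul]
  ring

lemma cycT_iterate (m k : ℕ) (c : ℂ) (φ : (Fin (m + 1) → A) → ℂ)
    (h : cycT m φ = c • φ) : (cycT m)^[k] φ = c ^ k • φ := by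
  induction k with
  | zero => simp
  | succ k ih =>
    rw [Function.iterate_succ_apply', ih, cycT_smul, h, smul_smul, pow_succ]

lemma cycT_trCochain (τ : A →L[ℂ] ℂ) (hτ : ∀ a b : A, τ (a * b) = τ (b * a)) (m : ℕ) :
    cycT m (trCochain τ m) = ((-1 : ℂ) ^ m) • trCochain τ m := by
  funext a
  simp only [cycT, trCochain, Pi.smul_apply, smul_eq_mul]
  rw [trace_rot τ hτ m a]

lemma signed_sum (n : ℕ) :
    ∑ k ∈ Finset.range (2 * n + 2), (k : ℂ) * (-1) ^ k = -((n : ℂ) + 1) := by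
  induction n with
  | zero => norm_num [Finset.sum_range_succ]
  | succ n ih =>
    have h : 2 * (n + 1) + 2 = (2 * n + 2) + 1 + 1 := by omega
    rw [h, Finset.sum_range_succ, Finset.sum_range_succ, ih]
    have he : (-1 : ℂ) ^ (2 * n + 2) = 1 := by
      rw [show 2 * n + 2 = 2 * (n + 1) by omega, pow_mul]; norm_num
    have ho : (-1 : ℂ) ^ (2 * n + 2 + 1) = -1 := by
      rw [pow_succ, he]; ring
    rw [he, ho]
    push_cast
    ring

end Aux

/-- Proposition 3.7 of the paper. If `τ ∈ A*` is a
continuous trace on a complex Banach algebra `A`, then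
`δ(h(δ'(τ^(2n)))) = τ^(2n+2)`, and consequently the shift map satisfies
`S̃(τ^(2n)) = N(δ(h(δ'(τ^(2n))))) = τ^(2n+2)`. -/
theorem shift_of_trace_cochain
    {A : Type*} [NonUnitalNormedRing A] [NormedSpace ℂ A]
    [IsScalarTower ℂ A A] [SMulCommClass ℂ A A] [CompleteSpace A]
    (τ : A →L[ℂ] ℂ) (hτ : ∀ a b : A, τ (a * b) = τ (b * a)) (n : ℕ) :
    hochDelta (2 * n + 1) (cycH (2 * n + 1) (hochDelta' (2 * n) (trCochain τ (2 * n)))) =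
      trCochain τ (2 * n + 2) ∧
    cycS (2 * n) (trCochain τ (2 * n)) = trCochain τ (2 * n + 2) := by
  have h1 : hochDelta' (2 * n) (trCochain τ (2 * n)) = trCochain τ (2 * n + 1) := by
    funext a
    simp only [hochDelta', trCochain]
    have hface : ∀ j : Fin (2 * n + 1),
        τ (ordProd (2 * n) (hochFace a j)) = τ (ordProd (2 * n + 1) a) := by
      intro j; rw [ordProd_hochFace]
    calc ∑ j : Fin (2 * n + 1), (-1 : ℂ) ^ (j : ℕ) * τ (ordProd (2 * n) (hochFace a j))
        = ∑ j : Fin (2 * n + 1), (-1 : ℂ) ^ (j : ℕ) * τ (ordProd (2 * n + 1) a) := by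
          exact Finset.sum_congr rfl fun j _ => by rw [hface j]
      _ = (∑ j : Fin (2 * n + 1), (-1 : ℂ) ^ (j : ℕ)) * τ (ordProd (2 * n + 1) a) := by
          rw [Finset.sum_mul]
      _ = τ (ordProd (2 * n + 1) a) := by
          rw [Fin.sum_univ_eq_sum_range (fun j => (-1 : ℂ) ^ j) (2 * n + 1),
            neg_one_geom_sum, if_neg (by simp [Nat.even_add_one, Nat.even_iff]),
            one_mul]
  have h2 : cycH (2 * n + 1) (trCochain τ (2 * n + 1)) = trCochain τ (2 * n + 1) := by
    have hT : cycT (2 * n + 1) (trCochain τ (2 * n + 1))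
        = ((-1 : ℂ)) • trCochain τ (2 * n + 1) := by
      rw [cycT_trCochain τ hτ (2 * n + 1), Odd.neg_one_pow ⟨n, by omega⟩]
    funext a
    simp only [cycH]
    have hit : ∀ k, (cycT (2 * n + 1))^[k] (trCochain τ (2 * n + 1)) a
        = (-1 : ℂ) ^ k * trCochain τ (2 * n + 1) a := by
      intro k
      rw [cycT_iterate (2 * n + 1) k (-1) _ hT]
      simp [smul_eq_mul]
    calc (-2 / ((2 * n + 1 : ℕ) + 1 : ℂ)) * ∑ k ∈ Finset.range (2 * n + 1 + 1),
          (k : ℂ) * (cycT (2 * n + 1))^[k] (trCochain τ (2 * n + 1)) a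
        = (-2 / ((2 * n + 1 : ℕ) + 1 : ℂ)) * ∑ k ∈ Finset.range (2 * n + 2),
            ((k : ℂ) * (-1) ^ k) * trCochain τ (2 * n + 1) a := by
          congr 1
          exact Finset.sum_congr rfl fun k _ => by rw [hit k]; ring
      _ = (-2 / ((2 * n + 1 : ℕ) + 1 : ℂ)) * (-((n : ℂ) + 1))
            * trCochain τ (2 * n + 1) a := by
          rw [← Finset.sum_mul, signed_sum n, mul_assoc]
      _ = trCochain τ (2 * n + 1) a := by
          have hne : ((2 * n + 1 : ℕ) + 1 : ℂ) ≠ 0 := by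
            have : ((2 * n + 1 : ℕ) : ℂ) + 1 = ((2 * n + 2 : ℕ) : ℂ) := by push_cast; ring
            rw [this]
            exact Nat.cast_ne_zero.mpr (by omega)
          have hcoef : (-2 / ((2 * n + 1 : ℕ) + 1 : ℂ)) * (-((n : ℂ) + 1)) = 1 := by
            rw [div_mul_eq_mul_div, div_eq_one_iff_eq hne]
            push_cast
            ring
          rw [hcoef, one_mul]
  have h3 : hochDelta (2 * n + 1) (trCochain τ (2 * n + 1)) = trCochain τ (2 * n + 2) := by
    funext a
    simp only [hochDelta, hochDelta', trCochain]
    have hface : ∀ j : Fin (2 * n + 2),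
        τ (ordProd (2 * n + 1) (hochFace a j)) = τ (ordProd (2 * n + 2) a) := by
      intro j; rw [ordProd_hochFace]
    have hsum : ∑ j : Fin (2 * n + 2), (-1 : ℂ) ^ (j : ℕ)
        * τ (ordProd (2 * n + 1) (hochFace a j)) = 0 := by
      calc ∑ j : Fin (2 * n + 2), (-1 : ℂ) ^ (j : ℕ) * τ (ordProd (2 * n + 1) (hochFace a j))
          = (∑ j : Fin (2 * n + 2), (-1 : ℂ) ^ (j : ℕ)) * τ (ordProd (2 * n + 2) a) := by
            rw [Finset.sum_mul]
            exact Finset.sum_congr rfl fun j _ => by rw [hface j]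
        _ = 0 := by
            rw [Fin.sum_univ_eq_sum_range (fun j => (-1 : ℂ) ^ j) (2 * n + 2),
              neg_one_geom_sum, if_pos ⟨n + 1, by omega⟩, zero_mul]
    rw [hsum, zero_add]
    have hpow : (-1 : ℂ) ^ (2 * n + 1 + 1) = 1 := by
      rw [show 2 * n + 1 + 1 = 2 * (n + 1) by omega, pow_mul]; norm_num
    rw [hpow, one_mul]
    exact trace_wrap τ hτ (2 * n + 1) a
  have h4 : cycN (2 * n + 2) (trCochain τ (2 * n + 2)) = trCochain τ (2 * n + 2) := by
    have hT : cycT (2 * n + 2) (trCochain τ (2 * n + 2)) = trCochain τ (2 * n + 2) := by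
      rw [cycT_trCochain τ hτ (2 * n + 2),
        show ((-1 : ℂ) ^ (2 * n + 2)) = 1 by
          rw [show 2 * n + 2 = 2 * (n + 1) by omega, pow_mul]; norm_num,
        one_smul]
    funext a
    simp only [cycN]
    have hit : ∀ k, (cycT (2 * n + 2))^[k] (trCochain τ (2 * n + 2)) a
        = trCochain τ (2 * n + 2) a := by
      intro k; rw [Function.iterate_fixed hT k]
    rw [Finset.sum_congr rfl fun k _ => hit k, Finset.sum_const, Finset.card_range,
      nsmul_eq_mul]
    have hne : ((2 * n + 2 : ℕ) + 1 : ℂ) ≠ 0 := by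
      have : ((2 * n + 2 : ℕ) : ℂ) + 1 = ((2 * n + 3 : ℕ) : ℂ) := by push_cast; ring
      rw [this]
      exact Nat.cast_ne_zero.mpr (by omega)
    have hXY : ((2 * n + 2 + 1 : ℕ) : ℂ) = ((2 * n + 2 : ℕ) : ℂ) + 1 := by push_cast; ring
    rw [hXY, ← mul_assoc, inv_mul_cancel₀ hne, one_mul]
  refine ⟨by rw [h1, h2, h3], ?_⟩
  show cycN (2 * n + 2) (hochDelta (2 * n + 1) (cycH (2 * n + 1)
    (hochDelta' (2 * n) (trCochain τ (2 * n))))) = trCochain τ (2 * n + 2)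
  rw [h1, h2, h3, h4]
end

section
/- In the abstract setting described below, with contracting homotopy σ' for F•, set S̃ = P∘δ∘h∘δ'∘j and B̃ = N∘σ'∘M. Then S̃∘B̃ = P∘δ − δ∘P − P∘δ∘h∘σ'∘M∘δ + δ∘P∘δ∘h∘σ'∘M as maps E^{n+1} → D^{n+1}. -/
/-- Lemma A.4 of the paper.  With a contracting homotopy
`σ'` for `F•`, `S̃ = P∘δ∘h∘δ'∘j` and `B̃ = N∘σ'∘M`, one has
`S̃∘B̃ = P∘δ − δ∘P − P∘δ∘h∘σ'∘M∘δ + δ∘P∘δ∘h∘σ'∘M`. -/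
theorem shift_comp_connes_B_identity
    (D E F G : ℤ → Type*)
    [∀ n, AddCommGroup (D n)] [∀ n, Module ℂ (D n)]
    [∀ n, AddCommGroup (E n)] [∀ n, Module ℂ (E n)]
    [∀ n, AddCommGroup (F n)] [∀ n, Module ℂ (F n)]
    [∀ n, AddCommGroup (G n)] [∀ n, Module ℂ (G n)]
    (dD : ∀ n : ℤ, D n →ₗ[ℂ] D (n + 1)) (dE : ∀ n : ℤ, E n →ₗ[ℂ] E (n + 1))
    (dF : ∀ n : ℤ, F n →ₗ[ℂ] F (n + 1)) (dG : ∀ n : ℤ, G n →ₗ[ℂ] G (n + 1))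
    (hdD : ∀ (n : ℤ) (x : D n), dD (n + 1) (dD n x) = 0)
    (hdE : ∀ (n : ℤ) (x : E n), dE (n + 1) (dE n x) = 0)
    (hdF : ∀ (n : ℤ) (x : F n), dF (n + 1) (dF n x) = 0)
    (hdG : ∀ (n : ℤ) (x : G n), dG (n + 1) (dG n x) = 0)
    (ι : ∀ n : ℤ, D n →ₗ[ℂ] E n) (M : ∀ n : ℤ, E n →ₗ[ℂ] F n)
    (N : ∀ n : ℤ, F n →ₗ[ℂ] G n)
    (hι : ∀ (n : ℤ) (x : D n), ι (n + 1) (dD n x) = dE n (ι n x))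
    (hM : ∀ (n : ℤ) (x : E n), M (n + 1) (dE n x) = dF n (M n x))
    (hN : ∀ (n : ℤ) (x : F n), N (n + 1) (dF n x) = dG n (N n x))
    (j : ∀ n : ℤ, G n →ₗ[ℂ] F n) (h : ∀ n : ℤ, F n →ₗ[ℂ] E n)
    (P : ∀ n : ℤ, E n →ₗ[ℂ] D n)
    (hNj : ∀ (n : ℤ) (x : G n), N n (j n x) = x)
    (hMh : ∀ (n : ℤ) (x : F n), M n (h n x) + j n (N n x) = x)
    (hhM : ∀ (n : ℤ) (x : E n), h n (M n x) + ι n (P n x) = x)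
    (hPι : ∀ (n : ℤ) (x : D n), P n (ι n x) = x)
    (σ' : ∀ n : ℤ, F (n + 1) →ₗ[ℂ] F n)
    (hσ' : ∀ (n : ℤ) (x : F (n + 1)), dF n (σ' n x) + σ' (n + 1) (dF (n + 1) x) = x) :
    ∀ (n : ℤ) (x : E (n + 1)),
      P (n + 1 + 1) (dE (n + 1) (h (n + 1) (dF n (j n (N n (σ' n (M (n + 1) x))))))) =
        P (n + 1 + 1) (dE (n + 1) x) - dD (n + 1) (P (n + 1) x) -
          P (n + 1 + 1) (dE (n + 1) (h (n + 1) (σ' (n + 1) (M (n + 1 + 1) (dE (n + 1) x))))) +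
          dD (n + 1) (P (n + 1) (dE n (h n (σ' n (M (n + 1) x))))) := by
  intro n x
  set y := σ' n (M (n+1) x) with hy
  have e1 : j n (N n y) = y - M n (h n y) := eq_sub_of_add_eq' (hMh n y)
  have e2 : dF n y = M (n+1) x - σ' (n+1) (M (n+1+1) (dE (n+1) x)) := by
    have h0 := hσ' n (M (n+1) x)
    rw [← hM (n+1) x] at h0
    exact eq_sub_of_add_eq h0
  have e3 : h (n+1) (M (n+1) (dE n (h n y)))
      = dE n (h n y) - ι (n+1) (P (n+1) (dE n (h n y))) :=
    eq_sub_of_add_eq (hhM (n+1) (dE n (h n y)))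
  have e4 : h (n+1) (M (n+1) x) = x - ι (n+1) (P (n+1) x) :=
    eq_sub_of_add_eq (hhM (n+1) x)
  rw [e1, map_sub, ← hM n (h n y), map_sub, e3, e2]
  simp only [map_sub, e4, hdE n (h n y), map_zero, ← hι (n+1), hPι]
  abel
end

section
/- In the abstract setting described below, with contracting homotopy σ' for F•, set B̃ = N∘σ'∘M and Y = h∘δ'∘j : Gⁿ → E^{n+1}. Then B̃∘Y = id − δ''∘N∘σ'∘j − N∘σ'∘j∘δ'' as maps Gⁿ → Gⁿ. -/
/-- Lemma A.6 of the paper.  With a contracting homotopy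
`σ'` for `F•`, `B̃ = N∘σ'∘M` and `Y = h∘δ'∘j : Gⁿ → E^{n+1}`, one has
`B̃∘Y = id − δ''∘N∘σ'∘j − N∘σ'∘j∘δ''`. -/
theorem connes_B_comp_Y_identity
    (D E F G : ℤ → Type*)
    [∀ n, AddCommGroup (D n)] [∀ n, Module ℂ (D n)]
    [∀ n, AddCommGroup (E n)] [∀ n, Module ℂ (E n)]
    [∀ n, AddCommGroup (F n)] [∀ n, Module ℂ (F n)]
    [∀ n, AddCommGroup (G n)] [∀ n, Module ℂ (G n)]
    (dD : ∀ n : ℤ, D n →ₗ[ℂ] D (n + 1)) (dE : ∀ n : ℤ, E n →ₗ[ℂ] E (n + 1))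
    (dF : ∀ n : ℤ, F n →ₗ[ℂ] F (n + 1)) (dG : ∀ n : ℤ, G n →ₗ[ℂ] G (n + 1))
    (hdD : ∀ (n : ℤ) (x : D n), dD (n + 1) (dD n x) = 0)
    (hdE : ∀ (n : ℤ) (x : E n), dE (n + 1) (dE n x) = 0)
    (hdF : ∀ (n : ℤ) (x : F n), dF (n + 1) (dF n x) = 0)
    (hdG : ∀ (n : ℤ) (x : G n), dG (n + 1) (dG n x) = 0)
    (ι : ∀ n : ℤ, D n →ₗ[ℂ] E n) (M : ∀ n : ℤ, E n →ₗ[ℂ] F n)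
    (N : ∀ n : ℤ, F n →ₗ[ℂ] G n)
    (hι : ∀ (n : ℤ) (x : D n), ι (n + 1) (dD n x) = dE n (ι n x))
    (hM : ∀ (n : ℤ) (x : E n), M (n + 1) (dE n x) = dF n (M n x))
    (hN : ∀ (n : ℤ) (x : F n), N (n + 1) (dF n x) = dG n (N n x))
    (j : ∀ n : ℤ, G n →ₗ[ℂ] F n) (h : ∀ n : ℤ, F n →ₗ[ℂ] E n)
    (P : ∀ n : ℤ, E n →ₗ[ℂ] D n)
    (hNj : ∀ (n : ℤ) (x : G n), N n (j n x) = x)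
    (hMh : ∀ (n : ℤ) (x : F n), M n (h n x) + j n (N n x) = x)
    (hhM : ∀ (n : ℤ) (x : E n), h n (M n x) + ι n (P n x) = x)
    (hPι : ∀ (n : ℤ) (x : D n), P n (ι n x) = x)
    (σ' : ∀ n : ℤ, F (n + 1) →ₗ[ℂ] F n)
    (hσ' : ∀ (n : ℤ) (x : F (n + 1)), dF n (σ' n x) + σ' (n + 1) (dF (n + 1) x) = x) :
    ∀ (n : ℤ) (x : G (n + 1)),
      N (n + 1) (σ' (n + 1) (M (n + 1 + 1) (h (n + 1 + 1) (dF (n + 1) (j (n + 1) x))))) =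
        x - dG n (N n (σ' n (j (n + 1) x))) -
          N (n + 1) (σ' (n + 1) (j (n + 1 + 1) (dG (n + 1) x))) := by
  intro n x
  have h1 : M (n+1+1) (h (n+1+1) (dF (n+1) (j (n+1) x)))
      = dF (n+1) (j (n+1) x) - j (n+1+1) (dG (n+1) x) := by
    have h2 := hMh (n+1+1) (dF (n+1) (j (n+1) x))
    rw [hN, hNj] at h2
    exact eq_sub_of_add_eq h2
  have h3 : σ' (n+1) (dF (n+1) (j (n+1) x))
      = j (n+1) x - dF n (σ' n (j (n+1) x)) := by
    have h4 := hσ' n (j (n+1) x)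
    exact (eq_sub_of_add_eq' h4).symm ▸ rfl
  rw [h1, map_sub, h3, map_sub, map_sub, hNj, hN]
end

section
/- In the abstract setting described below, with contracting homotopy σ' for F• and B̃ = N∘σ'∘M, suppose ψ ∈ E^{n+1} satisfies δψ = 0 and B̃ψ = δ''φ for some φ ∈ G^{n−1}. Then there exists χ ∈ Eⁿ such that M(ψ) = δ'(M(χ)); consequently ψ − δχ = ι(P(ψ − δχ)) lies in the image of ι. -/
/-- from Proposition A.3 of the paper, `ker B = im I`.
With a contracting homotopy `σ'` for `F•` and `B̃ = N∘σ'∘M`, if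
`ψ ∈ E^{n+1}` is a cocycle whose image `B̃ψ` is a coboundary `δ''φ`, then
there is `χ ∈ Eⁿ` with `M(ψ) = δ'(M(χ))`; consequently
`ψ − δχ = ι(P(ψ − δχ))` lies in the image of `ι`. -/
theorem kernel_of_connes_B_in_image_of_inclusion
    (D E F G : ℤ → Type*)
    [∀ n, AddCommGroup (D n)] [∀ n, Module ℂ (D n)]
    [∀ n, AddCommGroup (E n)] [∀ n, Module ℂ (E n)]
    [∀ n, AddCommGroup (F n)] [∀ n, Module ℂ (F n)]
    [∀ n, AddCommGroup (G n)] [∀ n, Module ℂ (G n)]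
    (dD : ∀ n : ℤ, D n →ₗ[ℂ] D (n + 1)) (dE : ∀ n : ℤ, E n →ₗ[ℂ] E (n + 1))
    (dF : ∀ n : ℤ, F n →ₗ[ℂ] F (n + 1)) (dG : ∀ n : ℤ, G n →ₗ[ℂ] G (n + 1))
    (hdD : ∀ (n : ℤ) (x : D n), dD (n + 1) (dD n x) = 0)
    (hdE : ∀ (n : ℤ) (x : E n), dE (n + 1) (dE n x) = 0)
    (hdF : ∀ (n : ℤ) (x : F n), dF (n + 1) (dF n x) = 0)
    (hdG : ∀ (n : ℤ) (x : G n), dG (n + 1) (dG n x) = 0)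
    (ι : ∀ n : ℤ, D n →ₗ[ℂ] E n) (M : ∀ n : ℤ, E n →ₗ[ℂ] F n)
    (N : ∀ n : ℤ, F n →ₗ[ℂ] G n)
    (hι : ∀ (n : ℤ) (x : D n), ι (n + 1) (dD n x) = dE n (ι n x))
    (hM : ∀ (n : ℤ) (x : E n), M (n + 1) (dE n x) = dF n (M n x))
    (hN : ∀ (n : ℤ) (x : F n), N (n + 1) (dF n x) = dG n (N n x))
    (j : ∀ n : ℤ, G n →ₗ[ℂ] F n) (h : ∀ n : ℤ, F n →ₗ[ℂ] E n)
    (P : ∀ n : ℤ, E n →ₗ[ℂ] D n)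
    (hNj : ∀ (n : ℤ) (x : G n), N n (j n x) = x)
    (hMh : ∀ (n : ℤ) (x : F n), M n (h n x) + j n (N n x) = x)
    (hhM : ∀ (n : ℤ) (x : E n), h n (M n x) + ι n (P n x) = x)
    (hPι : ∀ (n : ℤ) (x : D n), P n (ι n x) = x)
    (σ' : ∀ n : ℤ, F (n + 1) →ₗ[ℂ] F n)
    (hσ' : ∀ (n : ℤ) (x : F (n + 1)), dF n (σ' n x) + σ' (n + 1) (dF (n + 1) x) = x) :
    ∀ (n : ℤ) (ψ : E (n + 1 + 1)) (φ : G n),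
      dE (n + 1 + 1) ψ = 0 →
      N (n + 1) (σ' (n + 1) (M (n + 1 + 1) ψ)) = dG n φ →
      ∃ χ : E (n + 1),
        M (n + 1 + 1) ψ = dF (n + 1) (M (n + 1) χ) ∧
        ι (n + 1 + 1) (P (n + 1 + 1) (ψ - dE (n + 1) χ)) = ψ - dE (n + 1) χ := by
  intro n ψ φ hψ hφ
  set z : F (n + 1) := σ' (n + 1) (M (n + 1 + 1) ψ) - dF n (j n φ) with hz
  have hNz : N (n + 1) z = 0 := by
    rw [hz, map_sub, hφ, hN, hNj, sub_self]
  have hdFMψ : dF (n + 1 + 1) (M (n + 1 + 1) ψ) = 0 := by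
    rw [← hM, hψ, map_zero]
  have hdz : dF (n + 1) z = M (n + 1 + 1) ψ := by
    rw [hz, map_sub, hdF, sub_zero]
    have := hσ' (n + 1) (M (n + 1 + 1) ψ)
    rw [hdFMψ, map_zero, add_zero] at this
    exact this
  refine ⟨h (n + 1) z, ?_, ?_⟩
  · have hMχ : M (n + 1) (h (n + 1) z) = z := by
      have := hMh (n + 1) z
      rw [hNz, map_zero, add_zero] at this
      exact this
    rw [hMχ, hdz]
  · have hMχ : M (n + 1) (h (n + 1) z) = z := by
      have := hMh (n + 1) z
      rw [hNz, map_zero, add_zero] at this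
      exact this
    have hMx : M (n + 1 + 1) (ψ - dE (n + 1) (h (n + 1) z)) = 0 := by
      rw [map_sub, hM, hMχ, hdz, sub_self]
    have := hhM (n + 1 + 1) (ψ - dE (n + 1) (h (n + 1) z))
    rw [hMx, map_zero, zero_add] at this
    exact this
end
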